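/- A monomial ∏_{i=1}^{n-1} x_i^{c_i} does not lie in the G-parking function ideal I if and only if c = (c_1,...,c_{n-1}) is a G-parking function with respect to the sink v_n. -/

import Mathlib

open SimpleGraph
open scoped Classical

/-- A loopless multigraph on vertex type `V` with edge labels `E`. -/
structure MG (V : Type*) (E : Type*) where
  ends : E → Sym2 V
  no_loop : ∀ e, ¬ (ends e).IsDiag

variable {V E : Type*} [Fintype V] [DecidableEq V] [Fintype E]

/-- The underlying adjacency (simple) graph of a multigraph. -/
def MG.adjGraph (G : MG V E) : SimpleGraph V :=
  SimpleGraph.fromRel (fun u v => ∃ e, G.ends e = s(u, v))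

/-- `π` is a connected partition: every block induces a connected subgraph. -/
def ConnPart (H : SimpleGraph V) (π : Setoid V) : Prop :=
  ∀ c ∈ π.classes, (H.induce c).Connected

/-- `d_U(u)`: the number of edges joining `u` to a vertex outside `U`. -/
noncomputable def dU (G : MG V E) (U : Set V) (u : V) : ℕ :=
  Nat.card {e : E // ∃ w, w ∉ U ∧ G.ends e = s(u, w)}

/-- `{U, Uᶜ}` is a connected cut: both sides induce connected subgraphs. -/
def ConnCut (G : MG V E) (U : Set V) : Prop :=
  (G.adjGraph.induce U).Connected ∧ (G.adjGraph.induce Uᶜ).Connected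

/-- The monomial `x^C = ∏_{u ∈ U} x_u^{d_U(u)}` attached to the cut
`C = {U, Uᶜ}` with sink `s ∈ Uᶜ`, in `k[x_u : u ≠ s]`. -/
noncomputable def xC (k : Type*) [Field k] (G : MG V E) (s : V) (U : Set V) :
    MvPolynomial {v : V // v ≠ s} k :=
  MvPolynomial.monomial
    (Finsupp.equivFunOnFinite.symm
      fun u : {v : V // v ≠ s} => if (u : V) ∈ U then dU G U u else 0) 1

/-- The `G`-parking function ideal: generated by `x^C` for `C` a connected cut. -/
noncomputable def parkIdeal (k : Type*) [Field k] (G : MG V E) (s : V) :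
    Ideal (MvPolynomial {v : V // v ≠ s} k) :=
  Ideal.span {p | ∃ U : Set V, s ∉ U ∧ ConnCut G U ∧ p = xC k G s U}

/-- `c` is a `G`-parking function with respect to the sink `s`. -/
def IsParking (G : MG V E) (s : V) (c : {v : V // v ≠ s} → ℕ) : Prop :=
  ∀ U : Set V, U.Nonempty → s ∉ U →
    ∃ u, ∃ hu : u ∈ U, ∃ h : u ≠ s, c ⟨u, h⟩ < dU G U u

/-! A cut monomial `x^U` (for any nonempty `U ∌ s`) divides `x^c` exactly when `U` witnesses
that `c` is not parking, so it suffices to replace such a `U` by a connected cut whose monomial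
divides `x^U`. Restricting `U` to one of its components keeps `d_U` on it; then adding to this
component `U₁` every component of `U₁ᶜ` except that of the sink makes both sides connected,
the added vertices have no edges leaving the new set, and the degrees on `U₁` can only drop. -/

namespace SimpleGraph

variable {α : Type*} {H : SimpleGraph α} {A U : Set α} {a b s v w x : α}

/-- The component of `a` in `H.induce A`, as a subset of `α`; empty if `a ∉ A`. -/
def componentIn (H : SimpleGraph α) (A : Set α) (a : α) : Set α :=
  {v | ∃ p : H.Walk a v, ∀ x ∈ p.support, x ∈ A}

lemma componentIn_subset : H.componentIn A a ⊆ A :=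
  fun _ ⟨p, hp⟩ => hp _ p.end_mem_support

lemma mem_componentIn_self (ha : a ∈ A) : a ∈ H.componentIn A a :=
  ⟨.nil, by simpa using ha⟩

lemma mem_componentIn_of_adj (hv : v ∈ H.componentIn A a) (h : H.Adj v w) (hw : w ∈ A) :
    w ∈ H.componentIn A a := by
  obtain ⟨p, hp⟩ := hv
  refine ⟨p.concat h, fun x hx => ?_⟩
  rw [Walk.support_concat, List.mem_append, List.mem_singleton] at hx
  rcases hx with hx | rfl
  exacts [hp x hx, hw]

lemma mem_componentIn_of_mem_componentIn (hx : x ∈ H.componentIn A a)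
    (hx' : x ∈ H.componentIn A v) : v ∈ H.componentIn A a := by
  obtain ⟨p, hp⟩ := hx
  obtain ⟨q, hq⟩ := hx'
  refine ⟨p.append q.reverse, fun y hy => ?_⟩
  rw [Walk.mem_support_append_iff, Walk.support_reverse, List.mem_reverse] at hy
  exact hy.elim (hp y) (hq y)

lemma connected_induce_componentIn (ha : a ∈ A) : (H.induce (H.componentIn A a)).Connected := by
  refine induce_connected_of_patches a (mem_componentIn_self ha) fun {v} ⟨p, hp⟩ => ?_
  refine ⟨{x | x ∈ p.support}, fun x hx => ?_, p.start_mem_support, p.end_mem_support,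
    p.connected_induce_support.preconnected _ _⟩
  exact ⟨p.takeUntil x hx, fun y hy => hp y (p.support_takeUntil_subset_support hx hy)⟩

lemma exists_componentIn_adj_notMem (hH : H.Preconnected) (hv : v ∈ A) (hb : b ∉ A) :
    ∃ x ∈ H.componentIn A v, ∃ y ∉ A, H.Adj x y := by
  obtain ⟨p⟩ := hH v b
  obtain ⟨d, -, hd, hd'⟩ := p.exists_boundary_dart _ (mem_componentIn_self hv)
    fun hb' => hb (componentIn_subset hb')
  exact ⟨d.fst, hd, d.snd, fun hA => hd' (mem_componentIn_of_adj hd d.adj hA), d.adj⟩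

/-- Every component of `Uᶜ` other than the removed one is joined to `U` by an edge. -/
lemma connected_induce_compl_componentIn (hH : H.Preconnected) (hU : (H.induce U).Connected) :
    (H.induce (H.componentIn Uᶜ s)ᶜ).Connected := by
  obtain ⟨⟨u, hu⟩⟩ := hU.nonempty
  have hU_sub : U ⊆ (H.componentIn Uᶜ s)ᶜ := fun x hx hx' => componentIn_subset hx' hx
  refine induce_connected_of_patches u (hU_sub hu) fun {v} hv => ?_
  by_cases hvU : v ∈ U
  · exact ⟨U, hU_sub, hu, hvU, hU.preconnected _ _⟩
  obtain ⟨x, hx, y, hy, hxy⟩ :=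
    exists_componentIn_adj_notMem hH hvU (Set.notMem_compl_iff.mpr hu)
  have hv_sub : H.componentIn Uᶜ v ⊆ (H.componentIn Uᶜ s)ᶜ :=
    fun x hx hxs => hv (mem_componentIn_of_mem_componentIn hxs hx)
  exact ⟨_, Set.union_subset hv_sub hU_sub, Or.inr hu, Or.inl (mem_componentIn_self hvU),
    (connected_induce_union (connected_induce_componentIn hvU).preconnected hU.preconnected
      hx (not_not.mp hy) hxy).preconnected _ _⟩

end SimpleGraph

section

variable {V E : Type*} {G : MG V E} {A B U : Set V} {u : V}

lemma MG.adj_of_ends_eq {e : E} {v w : V} (h : G.ends e = s(v, w)) : G.adjGraph.Adj v w := by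
  have hvw : v ≠ w := by
    rintro rfl
    exact G.no_loop e (h ▸ Sym2.mk_isDiag_iff.mpr rfl)
  exact (fromRel_adj _ v w).mpr ⟨hvw, Or.inl ⟨e, h⟩⟩

lemma dU_le_dU [Finite E] (h : ∀ w ∉ B, G.adjGraph.Adj u w → w ∉ A) : dU G B u ≤ dU G A u :=
  Nat.card_le_card_of_injective
    (fun e => ⟨e.1, by
      obtain ⟨w, hw, he⟩ := e.2
      exact ⟨w, h w hw (MG.adj_of_ends_eq he), he⟩⟩)
    fun _ _ he => by simpa [Subtype.ext_iff] using he

lemma dU_eq_zero (h : ∀ w ∉ B, ¬ G.adjGraph.Adj u w) : dU G B u = 0 := by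
  have : IsEmpty {e : E // ∃ w, w ∉ B ∧ G.ends e = s(u, w)} :=
    ⟨fun ⟨_, w, hw, he⟩ => h w hw (MG.adj_of_ends_eq he)⟩
  exact Nat.card_of_isEmpty

/-- `U.indicator (dU G U)` is the exponent vector of the cut monomial `x^U`. -/
lemma indicator_dU_le [Finite E]
    (h : ∀ u ∈ B, ∀ w ∉ B, G.adjGraph.Adj u w → u ∈ A ∧ w ∉ A) :
    B.indicator (dU G B) ≤ A.indicator (dU G A) := by
  intro u
  by_cases huB : u ∈ B
  · by_cases huA : u ∈ A
    · simpa [huA, huB] using dU_le_dU fun w hw huw => (h u huB w hw huw).2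
    · simp [huB, dU_eq_zero fun w hw huw => huA (h u huB w hw huw).1]
  · simp [huB]

/-- The witness is the complement of the component of `s` in `U₁ᶜ`, where `U₁` is the component
of a vertex of `U` inside `U`. -/
lemma exists_connCut_indicator_le [Finite E] (hG : G.adjGraph.Connected) {s : V}
    (hU : U.Nonempty) (hs : s ∉ U) :
    ∃ U', s ∉ U' ∧ ConnCut G U' ∧ U'.indicator (dU G U') ≤ U.indicator (dU G U) := by
  obtain ⟨u₀, hu₀⟩ := hU
  set H := G.adjGraph
  set U₁ := H.componentIn U u₀
  have hsU₁ : s ∈ U₁ᶜ := fun h => hs (componentIn_subset h)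
  refine ⟨(H.componentIn U₁ᶜ s)ᶜ, not_not.mpr (mem_componentIn_self hsU₁), ⟨?_, ?_⟩,
    (indicator_dU_le (A := U₁) ?_).trans (indicator_dU_le ?_)⟩
  · exact connected_induce_compl_componentIn hG.preconnected
      (connected_induce_componentIn hu₀)
  · rw [compl_compl]
    exact connected_induce_componentIn hsU₁
  · intro u hu w hw huw
    rw [Set.notMem_compl_iff] at hw
    exact ⟨by_contra fun hu₁ => hu (mem_componentIn_of_adj hw huw.symm hu₁),
      componentIn_subset hw⟩
  · exact fun u hu w hw huw =>
      ⟨componentIn_subset hu, fun hwU => hw (mem_componentIn_of_adj hu huw hwU)⟩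

open MvPolynomial in
lemma monomial_mem_parkIdeal_iff [Fintype V] {k : Type*} [Field k] {s : V}
    {c : {v : V // v ≠ s} → ℕ} :
    monomial (Finsupp.equivFunOnFinite.symm c) (1 : k) ∈ parkIdeal k G s ↔
      ∃ U, s ∉ U ∧ ConnCut G U ∧ ∀ u ∈ U, ∀ h : u ≠ s, dU G U u ≤ c ⟨u, h⟩ := by
  let exponent (U : Set V) : {v // v ≠ s} →₀ ℕ :=
    Finsupp.equivFunOnFinite.symm fun u => if ↑u ∈ U then dU G U u else 0
  have hgen : {p | ∃ U, s ∉ U ∧ ConnCut G U ∧ p = xC k G s U} =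
      (fun d => monomial d (1 : k)) '' (exponent '' {U | s ∉ U ∧ ConnCut G U}) := by
    rw [Set.image_image]
    ext p
    simp [xC, exponent, eq_comm, and_assoc]
  rw [parkIdeal, hgen, mem_ideal_span_monomial_image, support_monomial, if_neg one_ne_zero]
  simp only [Finset.mem_singleton, forall_eq, Set.exists_mem_image, Set.mem_ofPred_eq, and_assoc,
    exponent, Finsupp.le_def, Finsupp.coe_equivFunOnFinite_symm, Subtype.forall]
  refine exists_congr fun U => and_congr_right' <| and_congr_right' <| forall_congr' fun u => ?_
  by_cases hu : u ∈ U <;> simp [hu]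

end

/-- A monomial `∏ x_i^{c_i}` does not lie in the `G`-parking function ideal iff
`c` is a `G`-parking function with respect to the sink. -/
theorem stmt_8 (k : Type*) [Field k] (G : MG V E) (hG : G.adjGraph.Connected)
    (s : V) (c : {v : V // v ≠ s} → ℕ) :
    MvPolynomial.monomial (Finsupp.equivFunOnFinite.symm c) (1 : k) ∉
        parkIdeal k G s ↔
      IsParking G s c := by
  rw [monomial_mem_parkIdeal_iff]
  constructor
  · intro hmem U hU hs
    by_contra! hle
    obtain ⟨U', hs', hcut, hU'⟩ := exists_connCut_indicator_le hG hU hs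
    refine hmem ⟨U', hs', hcut, fun u hu h => ?_⟩
    calc dU G U' u = U'.indicator (dU G U') u := (Set.indicator_of_mem hu _).symm
      _ ≤ U.indicator (dU G U) u := hU' u
      _ ≤ c ⟨u, h⟩ := Set.indicator_apply_le' (hle u · h) fun _ => Nat.zero_le _
  · rintro hP ⟨U, hs, hcut, hle⟩
    obtain ⟨⟨u, hu⟩⟩ := hcut.1.nonempty
    obtain ⟨v, hv, hvs, hlt⟩ := hP U ⟨u, hu⟩ hs
    exact (hle v hv hvs).not_gt hlt
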